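/- Let Λ ∈ R* with generalized decomposition Λ = Σᵢ₌₁^d 𝟙_{ζᵢ} ∘ pᵢ(∂). Then for every i and every multi-index α ∈ ℕⁿ and variable index j, the functional Γ = 𝟙_{ζᵢ} ∘ (∂^α pᵢ)(∂) ∈ A_Λ* satisfies M_{xⱼ}^t(Γ) = 𝟙_{ζᵢ} ∘ (∂ⱼ∂^α pᵢ)(∂) + (ζᵢ)ⱼ·Γ. Consequently (M_{xⱼ}^t − (ζᵢ)ⱼ)ⁿ(Γ) = 𝟙_{ζᵢ} ∘ (∂ⱼⁿ ∂^α pᵢ)(∂) for all n ≥ 0, so Γ is either zero or a generalized eigenvector of each M_{xⱼ}^t with eigenvalue (ζᵢ)ⱼ and rank deg_{xⱼ}(∂^α pᵢ)+1. -/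

import Mathlib

/-!
The operators `∂ᵢ` commute, so `q ↦ q(∂)` is the `k`-algebra map `aeval` into the commutative
subalgebra they generate. Both `q ↦ [q(∂), xⱼ]` and `q ↦ (∂ⱼ q)(∂)` vanish on constants and obey
the same product rule `D(q xᵢ) = D(q) ∂ᵢ + q(∂) D(xᵢ)`, and `[∂ᵢ, xⱼ] = δᵢⱼ`; hence
`q(∂)(xⱼ f) = xⱼ q(∂) f + (∂ⱼ q)(∂) f`. Evaluating at `ζ` gives
`M_{xⱼ}ᵗ Γ_q = Γ_{∂ⱼ q} + ζⱼ Γ_q` for `Γ_q = 𝟙_ζ ∘ q(∂)`, so `(M_{xⱼ}ᵗ - ζⱼ)ᵐ Γ_q = Γ_{∂ⱼᵐ q}`,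
which vanishes as soon as `m` exceeds the degree of `q` in `xⱼ`.
-/

open MvPolynomial

noncomputable section

variable {k : Type*}

def hankelKer [Field k] {n : ℕ} (Λ : Module.Dual k (MvPolynomial (Fin n) k)) :
    Ideal (MvPolynomial (Fin n) k) where
  carrier := {f | ∀ g, Λ (f * g) = 0}
  zero_mem' := by intro g; simp
  add_mem' := by
    intro a b ha hb g
    rw [add_mul, map_add, ha g, hb g, add_zero]
  smul_mem' := by
    intro c f hf g
    simp only [smul_eq_mul, Set.mem_setOf_eq] at *
    rw [mul_comm c f, mul_assoc]
    exact hf _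

def evalDual [CommSemiring k] {n : ℕ} (ζ : Fin n → k) :
    Module.Dual k (MvPolynomial (Fin n) k) := (aeval ζ).toLinearMap

def Mt [CommSemiring k] {n : ℕ} (a : MvPolynomial (Fin n) k) :
    Module.End k (Module.Dual k (MvPolynomial (Fin n) k)) :=
  LinearMap.lcomp k k (LinearMap.mulLeft k a)

/-- The differential operator `∂^α`. -/
def pderivPow [CommRing k] {n : ℕ} (α : Fin n →₀ ℕ) :
    Module.End k (MvPolynomial (Fin n) k) :=
  (List.ofFn fun i : Fin n => ((pderiv i).toLinearMap) ^ (α i)).prod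

/-- The differential operator `p(∂)` associated to a polynomial `p`. -/
def diffOp [CommRing k] {n : ℕ} (p : MvPolynomial (Fin n) k) :
    Module.End k (MvPolynomial (Fin n) k) :=
  ∑ α ∈ p.support, p.coeff α • pderivPow α

theorem MvPolynomial.pderiv_pderiv_comm {σ R : Type*} [CommRing R] (i j : σ)
    (f : MvPolynomial σ R) : pderiv i (pderiv j f) = pderiv j (pderiv i f) := by
  classical
  have hbracket : ⁅pderiv i, pderiv j⁆ = (0 : Derivation R (MvPolynomial σ R) _) :=
    derivation_ext fun l => by
      rw [Derivation.commutator_apply, pderiv_X, pderiv_X]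
      by_cases hj : j = l <;> by_cases hi : i = l <;> simp [hi, hj]
  simpa [Derivation.commutator_apply, sub_eq_zero] using congrArg (· f) hbracket

theorem MvPolynomial.pderiv_comp_mulLeft {σ R : Type*} [CommSemiring R] (i : σ)
    (a : MvPolynomial σ R) :
    (pderiv i).toLinearMap * LinearMap.mulLeft R a =
      LinearMap.mulLeft R a * (pderiv i).toLinearMap + LinearMap.mulLeft R (pderiv i a) := by
  refine LinearMap.ext fun f => ?_
  simp [mul_comm]

theorem MvPolynomial.degreeOf_pderiv_lt {σ R : Type*} [CommSemiring R] {j : σ}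
    {q : MvPolynomial σ R} {m : ℕ} (hm : 0 < m) (hq : q.degreeOf j ≤ m) :
    (pderiv j q).degreeOf j < m := by
  rw [degreeOf_lt_iff hm]
  intro s hs
  rw [mem_support_iff, coeff_pderiv] at hs
  have := monomial_le_degreeOf j (mem_support_iff.mpr (left_ne_zero_of_mul hs))
  simp only [Finsupp.add_apply, Finsupp.single_eq_same] at this
  omega

theorem MvPolynomial.pderiv_pow_eq_zero_of_degreeOf_lt {σ R : Type*} [CommSemiring R] {j : σ}
    {q : MvPolynomial σ R} {m : ℕ} (hq : q.degreeOf j < m) :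
    ((pderiv j).toLinearMap ^ m : Module.End R (MvPolynomial σ R)) q = 0 := by
  induction m generalizing q with
  | zero => omega
  | succ m ih =>
    rw [pow_succ, Module.End.mul_apply]
    rcases Nat.eq_zero_or_pos m with rfl | hm
    · have hj : j ∉ q.vars := mem_vars_iff_degreeOf_ne_zero.not_left.mpr (by omega)
      simp [pderiv_eq_zero_of_notMem_vars hj]
    · exact ih (degreeOf_pderiv_lt hm (by omega))

section DiffOp

variable (k) (σ : Type*) [CommRing k]

def pderivSubalgebra : Subalgebra k (Module.End k (MvPolynomial σ k)) :=
  Algebra.adjoin k (Set.range fun i => (pderiv i).toLinearMap)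

instance : IsMulCommutative (pderivSubalgebra k σ) :=
  Algebra.isMulCommutative_adjoin k <| by
    rintro _ ⟨i, rfl⟩ _ ⟨j, rfl⟩
    exact LinearMap.ext (pderiv_pderiv_comm i j)

open scoped IsMulCommutative

variable {k σ}

def diffOpHom : MvPolynomial σ k →ₐ[k] Module.End k (MvPolynomial σ k) :=
  (pderivSubalgebra k σ).val.comp
    (aeval fun i => ⟨(pderiv i).toLinearMap, Algebra.subset_adjoin ⟨i, rfl⟩⟩)

theorem diffOpHom_X (i : σ) : diffOpHom (X i : MvPolynomial σ k) = (pderiv i).toLinearMap := by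
  simp [diffOpHom]

theorem diffOpHom_comp_mulLeft_X (j : σ) (q : MvPolynomial σ k) :
    diffOpHom q * LinearMap.mulLeft k (X j) =
      LinearMap.mulLeft k (X j) * diffOpHom q + diffOpHom (pderiv j q) := by
  induction q using MvPolynomial.induction_on with
  | C a => simp [Algebra.commutes]
  | add p q hp hq =>
    simp only [map_add, add_mul, mul_add, hp, hq]
    abel
  | mul_X p i hp =>
    have hX : LinearMap.mulLeft k (pderiv i (X j)) =
        diffOpHom (pderiv j (X i) : MvPolynomial σ k) := by
      rcases eq_or_ne i j with rfl | hij
      · simp [Module.End.one_eq_id]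
      · simp [pderiv_X_of_ne hij, pderiv_X_of_ne hij.symm]
    rw [map_mul, diffOpHom_X, mul_assoc, pderiv_comp_mulLeft, mul_add, ← mul_assoc, hp, hX,
      pderiv_mul, map_add, map_mul, map_mul, diffOpHom_X]
    noncomm_ring

theorem pderivPow_eq_diffOpHom {n : ℕ} (α : Fin n →₀ ℕ) :
    pderivPow α = diffOpHom (monomial α (1 : k)) := by
  have hval : pderivPow α = (pderivSubalgebra k (Fin n)).val
      (List.ofFn fun i : Fin n => (⟨(pderiv i).toLinearMap, Algebra.subset_adjoin ⟨i, rfl⟩⟩ :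
        pderivSubalgebra k (Fin n)) ^ α i).prod := by
    simp [pderivPow, map_list_prod, List.map_ofFn, Function.comp_def]
  rw [hval, List.prod_ofFn, diffOpHom, AlgHom.comp_apply, aeval_monomial, map_one, one_mul,
    Finsupp.prod_fintype _ _ (by simp)]

theorem diffOp_eq_diffOpHom {n : ℕ} (p : MvPolynomial (Fin n) k) : diffOp p = diffOpHom p := by
  simp only [diffOp, pderivPow_eq_diffOpHom, ← map_smul, smul_eq_mul, mul_one,
    ← map_sum, ← p.as_sum]

end DiffOp

section Functionals

variable [CommRing k] {n : ℕ}

theorem evalDual_comp_mulLeft (ζ : Fin n → k) (a : MvPolynomial (Fin n) k) :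
    evalDual ζ ∘ₗ LinearMap.mulLeft k a = aeval ζ a • evalDual ζ := by
  refine LinearMap.ext fun f => ?_
  simp [evalDual]

theorem Mt_X_evalDual_comp_diffOp (ζ : Fin n → k) (j : Fin n) (q : MvPolynomial (Fin n) k) :
    Mt (X j) (evalDual ζ ∘ₗ diffOp q) =
      evalDual ζ ∘ₗ diffOp (pderiv j q) + ζ j • (evalDual ζ ∘ₗ diffOp q) := by
  have hMt : Mt (X j) (evalDual ζ ∘ₗ diffOp q) =
      evalDual ζ ∘ₗ (diffOp q * LinearMap.mulLeft k (X j)) := rfl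
  rw [hMt, diffOp_eq_diffOpHom, diffOpHom_comp_mulLeft_X, LinearMap.comp_add,
    Module.End.mul_eq_comp, ← LinearMap.comp_assoc, evalDual_comp_mulLeft, aeval_X, LinearMap.smul_comp, add_comm,
    diffOp_eq_diffOpHom]

theorem Mt_X_sub_pow_evalDual_comp_diffOp (ζ : Fin n → k) (j : Fin n)
    (q : MvPolynomial (Fin n) k) (m : ℕ) :
    ((Mt (X j) - ζ j • 1 : Module.End k (Module.Dual k (MvPolynomial (Fin n) k))) ^ m)
        (evalDual ζ ∘ₗ diffOp q) =
      evalDual ζ ∘ₗ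
        diffOp ((((pderiv j).toLinearMap : Module.End k (MvPolynomial (Fin n) k)) ^ m) q) := by
  induction m with
  | zero => simp
  | succ m ih =>
    rw [pow_succ', Module.End.mul_apply, ih, LinearMap.sub_apply, Mt_X_evalDual_comp_diffOp,
      pow_succ', Module.End.mul_apply]
    simp

theorem Mt_X_sub_pow_degreeOf_succ_evalDual_comp_diffOp (ζ : Fin n → k) (j : Fin n)
    (q : MvPolynomial (Fin n) k) :
    ((Mt (X j) - ζ j • 1 : Module.End k (Module.Dual k (MvPolynomial (Fin n) k))) ^
        (q.degreeOf j + 1)) (evalDual ζ ∘ₗ diffOp q) = 0 := by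
  rw [Mt_X_sub_pow_evalDual_comp_diffOp, pderiv_pow_eq_zero_of_degreeOf_lt (Nat.lt_succ_self _),
    diffOp_eq_diffOpHom, map_zero, LinearMap.comp_zero]

end Functionals

theorem stmt14_general [Field k] {n d : ℕ}
    (ζ : Fin d → (Fin n → k)) (p : Fin d → MvPolynomial (Fin n) k) :
    ∀ (i : Fin d) (α : Fin n →₀ ℕ) (j : Fin n),
      (Mt (X j)) (evalDual (ζ i) ∘ₗ diffOp (pderivPow α (p i))) =
          evalDual (ζ i) ∘ₗ diffOp (pderiv j (pderivPow α (p i))) +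
            ζ i j • (evalDual (ζ i) ∘ₗ diffOp (pderivPow α (p i))) ∧
      (∀ m : ℕ,
        (((Mt (X j) - ζ i j • 1 : Module.End k (Module.Dual k (MvPolynomial (Fin n) k)))) ^ m)
            (evalDual (ζ i) ∘ₗ diffOp (pderivPow α (p i))) =
          evalDual (ζ i) ∘ₗ
            diffOp ((((pderiv j).toLinearMap : Module.End k (MvPolynomial (Fin n) k)) ^ m)
              (pderivPow α (p i)))) ∧
      (((Mt (X j) - ζ i j • 1 : Module.End k (Module.Dual k (MvPolynomial (Fin n) k)))) ^ ((pderivPow α (p i)).degreeOf j + 1))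
            (evalDual (ζ i) ∘ₗ diffOp (pderivPow α (p i))) = 0 := by
  intro i α j
  exact ⟨Mt_X_evalDual_comp_diffOp (ζ i) j _, Mt_X_sub_pow_evalDual_comp_diffOp (ζ i) j _,
    Mt_X_sub_pow_degreeOf_succ_evalDual_comp_diffOp (ζ i) j _⟩

theorem stmt14 [Field k] [IsAlgClosed k] [CharZero k] {n d : ℕ}
    (Λ : Module.Dual k (MvPolynomial (Fin n) k))
    (hfin : FiniteDimensional k (MvPolynomial (Fin n) k ⧸ hankelKer Λ))
    (ζ : Fin d → (Fin n → k)) (p : Fin d → MvPolynomial (Fin n) k)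
    (hζ : Function.Injective ζ)
    (hΛ : Λ = ∑ i, evalDual (ζ i) ∘ₗ diffOp (p i)) :
    ∀ (i : Fin d) (α : Fin n →₀ ℕ) (j : Fin n),
      (Mt (X j)) (evalDual (ζ i) ∘ₗ diffOp (pderivPow α (p i))) =
          evalDual (ζ i) ∘ₗ diffOp (pderiv j (pderivPow α (p i))) +
            ζ i j • (evalDual (ζ i) ∘ₗ diffOp (pderivPow α (p i))) ∧
      (∀ m : ℕ,
        (((Mt (X j) - ζ i j • 1 : Module.End k (Module.Dual k (MvPolynomial (Fin n) k)))) ^ m)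
            (evalDual (ζ i) ∘ₗ diffOp (pderivPow α (p i))) =
          evalDual (ζ i) ∘ₗ
            diffOp ((((pderiv j).toLinearMap : Module.End k (MvPolynomial (Fin n) k)) ^ m)
              (pderivPow α (p i)))) ∧
      (((Mt (X j) - ζ i j • 1 : Module.End k (Module.Dual k (MvPolynomial (Fin n) k)))) ^ ((pderivPow α (p i)).degreeOf j + 1))
            (evalDual (ζ i) ∘ₗ diffOp (pderivPow α (p i))) = 0 :=
  stmt14_general ζ p

end
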